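/- arXiv:2203.13033 — 2 statements merged into one kernel-verified Lean document; each statement's English description precedes it below -/
import Mathlib

section
/- Let G be the infinite-dimensional Heisenberg Lie algebra, η a character of U(G₊), a ≠ 0, and M̃_{η,a} the Whittaker module over G̃ = G ⊕ ℂd. For a Whittaker vector v and x ∈ G₊ with [x, z] = 0 for z ∈ U(G₋), the element (x − η(x))·(d^k z v) is a linear combination of d^j z v with j < k and coefficients proportional to η(x). Consequently, if η(x_n) ≠ 0 for infinitely many n, then for any nonzero w ∈ M̃_{η,a} there exists u ∈ U(G₊ ⊕ ℂd) with u·w a nonzero element of U(G₋)·v. -/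
/-!
Modulo the left ideal generated by the `x_n - η(x_n)` and `c - a`, the relation `x_n d = (d - n) x_n`
turns `x_n - η(x_n)` into `η(x_n)` times the finite difference `p(d) ↦ p(d - n) - p(d)` on vectors
`p(d) z v` with `[x_n, z] = 0`. Every vector is a sum `w = ∑_{j ≤ k} d^j z_j v` with
`z_j ∈ ℂ[y_1, y_2, …]`, since the span of these is stable under the generators of `G̃`. Only finitely
many `y_m` occur in the `z_j`, so for some `n` with `η(x_n) ≠ 0` the element `x_n` commutes with
every `z_j`, and then `(x_n - η(x_n))^k w = η(x_n)^k k! (-n)^k z_k v`. This is nonzero when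
`z_k ≠ 0` because `z ↦ z v` is injective on `ℂ[y_1, y_2, …]`, which is read off an explicit
realization of the module on functions `ℂ → ℂ[y_1, y_2, …]`.
-/

open UniversalEnvelopingAlgebra

namespace Polynomial

variable {R : Type*} [CommRing R] (s : R)

theorem taylor_sub_one_X_pow (j : ℕ) :
    (taylor s - 1) (X ^ j : R[X]) = ∑ i ∈ Finset.range j, (j.choose i * s ^ (j - i)) • X ^ i := by
  rw [LinearMap.sub_apply, taylor_X_pow, add_pow, Finset.sum_range_succ]
  simp [smul_eq_C_mul, mul_comm, mul_left_comm]

theorem taylor_sub_one_pow_X_pow_of_lt {j k : ℕ} (h : j < k) :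
    ((taylor s - 1) ^ k) (X ^ j : R[X]) = 0 := by
  induction k generalizing j with
  | zero => omega
  | succ k ih =>
    rw [pow_succ, Module.End.mul_apply, taylor_sub_one_X_pow, map_sum]
    exact Finset.sum_eq_zero fun i hi => by
      rw [map_smul, ih (by have := Finset.mem_range.1 hi; omega), smul_zero]

theorem taylor_sub_one_pow_X_pow_self (k : ℕ) :
    ((taylor s - 1) ^ k) (X ^ k : R[X]) = C (k.factorial * s ^ k) := by
  induction k with
  | zero => simp
  | succ k ih =>
    rw [pow_succ, Module.End.mul_apply, taylor_sub_one_X_pow, map_sum, Finset.sum_range_succ,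
      Finset.sum_eq_zero fun i hi => by
        rw [map_smul, taylor_sub_one_pow_X_pow_of_lt s (Finset.mem_range.1 hi), smul_zero],
      zero_add, map_smul, ih, smul_eq_C_mul, ← C_mul]
    congr 1
    rw [Nat.add_sub_cancel_left]
    push_cast [Nat.factorial_succ, Nat.choose_succ_self_right]
    ring

end Polynomial

section Commutator

open Polynomial

variable {R A : Type*} [CommRing R] [Ring A] [Algebra R A]

theorem mul_pow_eq_sub_pow_mul {d x : A} {r : R} (h : d * x - x * d = r • x) (j : ℕ) :
    x * d ^ j = (d - algebraMap R A r) ^ j * x := by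
  have hstep : x * d = (d - algebraMap R A r) * x := by
    rw [sub_mul, ← Algebra.smul_def, ← h]; abel
  induction j with
  | zero => simp
  | succ j ih => rw [pow_succ, ← mul_assoc, ih, mul_assoc, hstep, ← mul_assoc, ← pow_succ]

theorem mul_aeval_eq_aeval_taylor_mul {d x : A} {r : R} (h : d * x - x * d = r • x) (q : R[X]) :
    x * aeval d q = aeval d (taylor (-r) q) * x := by
  induction q using Polynomial.induction_on' with
  | add p q hp hq => rw [map_add, map_add, map_add, mul_add, hp, hq, add_mul]
  | monomial j c =>
    rw [taylor_monomial, aeval_monomial, map_mul, map_pow, aeval_C, map_add, aeval_X, aeval_C,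
      map_neg, ← sub_eq_add_neg, ← mul_assoc, ← Algebra.commutes, mul_assoc,
      mul_pow_eq_sub_pow_mul h, mul_assoc]

theorem mul_sub_mul_eq_of_derivation {ι : Type*} (σ : MvPolynomial ι R →ₐ[R] A)
    (D : Derivation R (MvPolynomial ι R) (MvPolynomial ι R)) {x c : A}
    (hc : ∀ p, Commute c (σ p)) (hx : ∀ i, x * σ (.X i) - σ (.X i) * x = c * σ (D (.X i)))
    (p : MvPolynomial ι R) : x * σ p - σ p * x = c * σ (D p) := by
  induction p using MvPolynomial.induction_on with
  | C r => simp [Algebra.commutes]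
  | add p q hp hq => simp only [map_add, add_mul, mul_add, ← hp, ← hq]; abel
  | mul_X p i hp =>
    calc x * σ (p * .X i) - σ (p * .X i) * x
        = (x * σ p - σ p * x) * σ (.X i) + σ p * (x * σ (.X i) - σ (.X i) * x) := by
          rw [map_mul]; noncomm_ring
      _ = c * σ (D (p * .X i)) := by
          rw [hp, hx, D.leibniz, smul_eq_mul, smul_eq_mul, mul_comm (MvPolynomial.X i), map_add,
            map_mul, map_mul, ← mul_assoc (σ p), ← (hc p).eq]
          noncomm_ring

end Commutator

namespace MvPolynomial

variable {R A ι : Type*} [CommRing R] [Ring A] [Algebra R A]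

open scoped IsMulCommutative in
noncomputable def aevalOfCommute (g : ι → A) (hg : ∀ i j, Commute (g i) (g j)) :
    MvPolynomial ι R →ₐ[R] A :=
  have := Algebra.isMulCommutative_adjoin R (s := Set.range g) (by
    rintro _ ⟨i, rfl⟩ _ ⟨j, rfl⟩; exact hg i j)
  (Algebra.adjoin R (Set.range g)).val.comp
    (aeval fun i => ⟨g i, Algebra.subset_adjoin ⟨i, rfl⟩⟩)

variable (g : ι → A) (hg : ∀ i j, Commute (g i) (g j))

@[simp] theorem aevalOfCommute_X (i : ι) : aevalOfCommute (R := R) g hg (X i) = g i := by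
  simp [aevalOfCommute]

theorem aevalOfCommute_mem_adjoin (p : MvPolynomial ι R) :
    aevalOfCommute g hg p ∈ Algebra.adjoin R (Set.range g) :=
  Subtype.prop _

end MvPolynomial

section PbwEval

open Polynomial

variable {R A B : Type*} [CommRing R] [Ring A] [Algebra R A] [Semiring B] [Module R B]

-- PBW order: the powers of `δ` stand to the left of the coefficients `σ (F.coeff j)`.
noncomputable def pbwEval (δ : A) (σ : B →ₗ[R] A) : B[X] →ₗ[R] A :=
  lsum fun j => LinearMap.mulLeft R (δ ^ j) ∘ₗ σ

variable (δ : A) (σ : B →ₗ[R] A)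

theorem pbwEval_monomial (j : ℕ) (b : B) : pbwEval δ σ (monomial j b) = δ ^ j * σ b := by
  simp [pbwEval]

theorem pbwEval_eq_sum_range (F : B[X]) :
    pbwEval δ σ F = ∑ j ∈ Finset.range (F.natDegree + 1), δ ^ j * σ (F.coeff j) := by
  simp [pbwEval, sum_over_range]

end PbwEval

namespace Submodule.Quotient

open Polynomial

variable {R A : Type*} [CommRing R] [Ring A] [Algebra R A] {I : Submodule A A}

theorem mk_mul_of_sub_algebraMap_mem {x : A} {r : R} (hx : x - algebraMap R A r ∈ I) (u : A) :
    (mk (u * x) : A ⧸ I) = r • mk u := by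
  have h : u * x = u * (x - algebraMap R A r) + r • u := by
    rw [mul_sub, Algebra.smul_def, Algebra.commutes]; abel
  have h0 : (mk (u * (x - algebraMap R A r)) : A ⧸ I) = 0 := (mk_eq_zero I).2 (I.smul_mem u hx)
  rw [h, mk_add, h0, zero_add, mk_smul]

variable {d x z : A} {r η : R}

theorem sub_smul_mk_aeval_mul (hdx : d * x - x * d = r • x) (hxz : Commute x z)
    (hx : x - algebraMap R A η ∈ I) (q : R[X]) :
    (x - algebraMap R A η) • (mk (aeval d q * z) : A ⧸ I) =
      η • mk (aeval d ((taylor (-r) - 1) q) * z) := by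
  rw [sub_smul, ← mk_smul, smul_eq_mul, ← mul_assoc, mul_aeval_eq_aeval_taylor_mul hdx, mul_assoc,
    hxz.eq, ← mul_assoc, mk_mul_of_sub_algebraMap_mem hx, algebraMap_smul, LinearMap.sub_apply,
    map_sub, sub_mul, mk_sub, smul_sub, Module.End.one_apply]

theorem sub_pow_smul_mk_aeval_mul (hdx : d * x - x * d = r • x) (hxz : Commute x z)
    (hx : x - algebraMap R A η ∈ I) (k : ℕ) (q : R[X]) :
    (x - algebraMap R A η) ^ k • (mk (aeval d q * z) : A ⧸ I) =
      η ^ k • mk (aeval d (((taylor (-r) - 1) ^ k) q) * z) := by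
  induction k generalizing q with
  | zero => simp
  | succ k ih =>
    rw [pow_succ, mul_smul, sub_smul_mk_aeval_mul hdx hxz hx, smul_comm, ih, smul_smul,
      ← pow_succ', pow_succ (taylor (-r) - 1) k, Module.End.mul_apply]

theorem sub_smul_mk_pow_mul (hdx : d * x - x * d = r • x) (hxz : Commute x z)
    (hx : x - algebraMap R A η ∈ I) (k : ℕ) :
    (x - algebraMap R A η) • (mk (d ^ k * z) : A ⧸ I) =
      ∑ j ∈ Finset.range k, (η * (k.choose j * (-r) ^ (k - j))) • mk (d ^ j * z) := by
  have h := sub_smul_mk_aeval_mul hdx hxz hx (I := I) (X ^ k)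
  rw [aeval_X_pow] at h
  rw [h, taylor_sub_one_X_pow, map_sum, Finset.sum_mul, ← mkQ_apply, map_sum, Finset.smul_sum]
  refine Finset.sum_congr rfl fun j _ => ?_
  rw [mkQ_apply, map_smul, aeval_X_pow, smul_mul_assoc, mk_smul, smul_smul]

theorem sub_pow_smul_mk_pow_mul_of_lt (hdx : d * x - x * d = r • x) (hxz : Commute x z)
    (hx : x - algebraMap R A η ∈ I) {j k : ℕ} (hjk : j < k) :
    (x - algebraMap R A η) ^ k • (mk (d ^ j * z) : A ⧸ I) = 0 := by
  have h := sub_pow_smul_mk_aeval_mul hdx hxz hx (I := I) k (X ^ j)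
  rwa [aeval_X_pow, taylor_sub_one_pow_X_pow_of_lt _ hjk, map_zero, zero_mul, mk_zero,
    smul_zero] at h

theorem sub_pow_smul_mk_pow_mul_self (hdx : d * x - x * d = r • x) (hxz : Commute x z)
    (hx : x - algebraMap R A η ∈ I) (k : ℕ) :
    (x - algebraMap R A η) ^ k • (mk (d ^ k * z) : A ⧸ I) =
      (η ^ k * (k.factorial * (-r) ^ k)) • mk z := by
  have h := sub_pow_smul_mk_aeval_mul hdx hxz hx (I := I) k (X ^ k)
  rwa [aeval_X_pow, taylor_sub_one_pow_X_pow_self, aeval_C, ← Algebra.smul_def, mk_smul,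
    smul_smul] at h

theorem sub_pow_natDegree_smul_mk_pbwEval {B : Type*} [Semiring B] [Module R B] (σ : B →ₗ[R] A)
    (hdx : d * x - x * d = r • x) (hx : x - algebraMap R A η ∈ I) (F : B[X])
    (hxF : ∀ j, Commute x (σ (F.coeff j))) :
    (x - algebraMap R A η) ^ F.natDegree • (mk (pbwEval d σ F) : A ⧸ I) =
      mk (σ ((η ^ F.natDegree * (F.natDegree.factorial * (-r) ^ F.natDegree)) • F.leadingCoeff)) := by
  rw [map_smul, mk_smul, pbwEval_eq_sum_range, ← mkQ_apply, map_sum, Finset.smul_sum,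
    Finset.sum_range_succ, Finset.sum_eq_zero fun j hj => ?_, zero_add]
  · exact sub_pow_smul_mk_pow_mul_self hdx (hxF _) hx _
  · exact sub_pow_smul_mk_pow_mul_of_lt hdx (hxF j) hx (Finset.mem_range.1 hj)

end Submodule.Quotient

section PbwRange

open Polynomial Submodule.Quotient

variable {R A B : Type*} [CommRing R] [Ring A] [Algebra R A] [Semiring B] [Module R B]
  (I : Submodule A A) (δ : A) (σ : B →ₗ[R] A)

noncomputable def pbwRange : Submodule R (A ⧸ I) :=
  LinearMap.range ((I.mkQ.restrictScalars R) ∘ₗ pbwEval δ σ)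

theorem mem_pbwRange_iff {w : A ⧸ I} : w ∈ pbwRange I δ σ ↔ ∃ F, mk (pbwEval δ σ F) = w :=
  Iff.rfl

theorem mk_pow_mul_mem_pbwRange (j : ℕ) (b : B) : (mk (δ ^ j * σ b) : A ⧸ I) ∈ pbwRange I δ σ :=
  ⟨monomial j b, by simp [pbwEval_monomial]⟩

theorem mk_aeval_mul_mem_pbwRange (q : R[X]) (b : B) :
    (mk (aeval δ q * σ b) : A ⧸ I) ∈ pbwRange I δ σ := by
  induction q using Polynomial.induction_on' with
  | add q q' hq hq' => rw [map_add, add_mul, mk_add]; exact add_mem hq hq'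
  | monomial j r =>
    rw [aeval_monomial, ← Algebra.smul_def, smul_mul_assoc, mk_smul]
    exact (pbwRange I δ σ).smul_mem r (mk_pow_mul_mem_pbwRange I δ σ j b)

theorem smul_mem_pbwRange {u : A} (h : ∀ j b, u • (mk (δ ^ j * σ b) : A ⧸ I) ∈ pbwRange I δ σ)
    {w : A ⧸ I} (hw : w ∈ pbwRange I δ σ) : u • w ∈ pbwRange I δ σ := by
  obtain ⟨F, rfl⟩ := hw
  induction F using Polynomial.induction_on' with
  | add F G hF hG => rw [map_add, smul_add]; exact add_mem hF hG
  | monomial j b => simpa [pbwEval_monomial] using h j b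

end PbwRange

namespace UniversalEnvelopingAlgebra

attribute [local instance 100] LieRing.ofAssociativeRing

variable {R L : Type*} [CommRing R] [LieRing L] [LieAlgebra R L]

theorem ι_mul_sub_mul (x y : L) : ι R x * ι R y - ι R y * ι R x = ι R ⁅x, y⁆ := by
  rw [LieHom.map_lie, Ring.lie_def]

theorem adjoin_range_ι :
    Algebra.adjoin R (Set.range (ι R : L → UniversalEnvelopingAlgebra R L)) = ⊤ := by
  have : (ι R : L → UniversalEnvelopingAlgebra R L) = mkAlgHom R L ∘ TensorAlgebra.ι R := by
    ext; simp
  rw [this, Set.range_comp, ← AlgHom.map_adjoin, TensorAlgebra.adjoin_range_ι, Algebra.map_top,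
    AlgHom.range_eq_top]
  exact RingCon.mkₐ_surjective _

theorem commute_ι_of_forall_lie_eq_zero {c : L} (hc : ∀ z : L, ⁅c, z⁆ = 0)
    (u : UniversalEnvelopingAlgebra R L) : Commute (ι R c) u := by
  refine Algebra.commute_of_mem_adjoin_of_forall_mem_commute (s := Set.range (ι R))
    (by rw [adjoin_range_ι]; trivial) ?_
  rintro _ ⟨z, rfl⟩
  rw [commute_iff_lie_eq, ← LieHom.map_lie, hc, map_zero]

theorem smul_mem_of_forall_ι_basis_smul_mem {κ M : Type*} [AddCommGroup M]
    [Module (UniversalEnvelopingAlgebra R L) M] [Module R M]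
    [IsScalarTower R (UniversalEnvelopingAlgebra R L) M] (b : Module.Basis κ R L)
    {N : Submodule R M} (h : ∀ i, ∀ m ∈ N, ι R (b i) • m ∈ N)
    (u : UniversalEnvelopingAlgebra R L) {m : M} (hm : m ∈ N) : u • m ∈ N := by
  have hι (l : L) : ∀ m ∈ N, ι R l • m ∈ N := by
    induction b.mem_span l using Submodule.span_induction with
    | mem _ hl => obtain ⟨i, rfl⟩ := hl; exact h i
    | zero => simp
    | add x y _ _ hx hy => intro m hm; rw [map_add, add_smul]; exact add_mem (hx m hm) (hy m hm)
    | smul r x _ hx => intro m hm; rw [map_smul, smul_assoc]; exact N.smul_mem r (hx m hm)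
  induction (show u ∈ Algebra.adjoin R (Set.range (ι R)) by rw [adjoin_range_ι]; trivial)
    using Algebra.adjoin_induction generalizing m with
  | mem _ hu => obtain ⟨l, rfl⟩ := hu; exact hι l m hm
  | algebraMap r => rw [algebraMap_smul]; exact N.smul_mem r hm
  | add u v _ _ hu hv => rw [add_smul]; exact add_mem (hu hm) (hv hm)
  | mul u v _ _ hu hv => rw [mul_smul]; exact hu (hv hm)

end UniversalEnvelopingAlgebra

theorem LinearMap.map_lie_of_basis {R L A κ : Type*} [CommRing R] [LieRing L] [LieAlgebra R L]
    [LieRing A] [LieAlgebra R A] (b : Module.Basis κ R L) (F : L →ₗ[R] A)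
    (h : ∀ i j, F ⁅b i, b j⁆ = ⁅F (b i), F (b j)⁆) (x y : L) : F ⁅x, y⁆ = ⁅F x, F y⁆ := by
  have : ((LieModule.toEnd R L L : L →ₗ[R] Module.End R L).compr₂ F) =
      ((LieModule.toEnd R A A : A →ₗ[R] Module.End R A) ∘ₗ F).compl₂ F :=
    b.ext fun i => b.ext fun j => by simpa using h i j
  simpa using LinearMap.congr_fun₂ this x y

-- The generic `smul_lie` does not rewrite commutators in `Module.End`: there the scalar action
-- is not reducibly the one of the algebra.
namespace Module.End

attribute [local instance 100] LieRing.ofAssociativeRing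

variable {R M : Type*} [CommRing R] [AddCommGroup M] [Module R M]

theorem smul_lie (t : R) (f g : Module.End R M) : ⁅t • f, g⁆ = t • ⁅f, g⁆ := by
  rw [Ring.lie_def, Ring.lie_def, smul_mul_assoc, mul_smul_comm, smul_sub]

theorem lie_smul (t : R) (f g : Module.End R M) : ⁅f, t • g⁆ = t • ⁅f, g⁆ := by
  rw [Ring.lie_def, Ring.lie_def, smul_mul_assoc, mul_smul_comm, smul_sub]

end Module.End

/-! A representation of `G̃` on functions `f : ℂ → ℂ[y₁, y₂, …]` in which the constant function `1`
is a Whittaker vector of type `(η, a)`: `x_n` acts by `η n • (f ↦ f (· - n)) + a • ∂/∂y_n`, `y_m`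
and `c` by multiplication with `y_m` and `a`, and `d` by `f ↦ (s ↦ s • f s) - E f`, where `E` is the
Euler operator with `deg y_m = m`. The shift in `s` is what gives `[d, x_n] = n x_n` on the `η`
part. -/
namespace WhittakerModel

open MvPolynomial

attribute [local instance 100] LieRing.ofAssociativeRing

local notation "P" => MvPolynomial ℕ+ ℂ
local notation "V" => ℂ → MvPolynomial ℕ+ ℂ
local notation "∂" => pderiv (R := ℂ) (σ := ℕ+)

noncomputable def euler : Derivation ℂ P P :=
  mkDerivation ℂ fun m => (m : ℂ) • X m

theorem euler_X (m : ℕ+) : euler (X m) = (m : ℂ) • X m := mkDerivation_X _ _ _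

theorem lie_pderiv_pderiv (n m : ℕ+) : ⁅∂ n, ∂ m⁆ = 0 := by
  classical
  refine derivation_ext fun i => ?_
  simp [Derivation.commutator_apply, pderiv_X, Pi.single_apply, apply_ite]

theorem lie_euler_pderiv (n : ℕ+) : ⁅euler, ∂ n⁆ = -(n : ℂ) • ∂ n := by
  classical
  refine derivation_ext fun i => ?_
  simp [Derivation.commutator_apply, pderiv_X, euler, mkDerivation_X, Pi.single_apply, apply_ite]
  rintro rfl; simp

theorem lie_lmul_lmul (p q : P) : ⁅Algebra.lmul ℂ P p, Algebra.lmul ℂ P q⁆ = 0 := by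
  rw [Ring.lie_def, ← map_mul, ← map_mul, mul_comm, sub_self]

theorem lie_derivation_lmul (D : Derivation ℂ P P) (p : P) :
    ⁅(D : Module.End ℂ P), Algebra.lmul ℂ P p⁆ = Algebra.lmul ℂ P (D p) :=
  LinearMap.ext fun f => by simp [Ring.lie_def, D.leibniz, mul_comm]

noncomputable def pointwise : Module.End ℂ P →ₐ[ℂ] Module.End ℂ V where
  toFun φ := φ.compLeft ℂ
  map_one' := rfl
  map_mul' _ _ := rfl
  map_zero' := rfl
  map_add' _ _ := rfl
  commutes' _ := rfl

noncomputable def shift (n : ℂ) : Module.End ℂ V := LinearMap.funLeft ℂ P (· - n)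

noncomputable def coordMul : Module.End ℂ V := LinearMap.pi fun s => s • LinearMap.proj s

@[simp] theorem pointwise_apply (φ : Module.End ℂ P) (f : V) (s : ℂ) :
    pointwise φ f s = φ (f s) := rfl

@[simp] theorem shift_apply (n : ℂ) (f : V) (s : ℂ) : shift n f s = f (s - n) := rfl

@[simp] theorem coordMul_apply (f : V) (s : ℂ) : coordMul f s = s • f s := rfl

theorem pointwise_lie (φ ψ : Module.End ℂ P) : pointwise ⁅φ, ψ⁆ = ⁅pointwise φ, pointwise ψ⁆ :=
  pointwise.toLieHom.map_lie φ ψ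

theorem lie_pointwise_derivation (D D' : Derivation ℂ P P) :
    ⁅pointwise D, pointwise D'⁆ = pointwise ((⁅D, D'⁆ : Derivation ℂ P P) : Module.End ℂ P) := by
  rw [← pointwise_lie, ← Derivation.commutator_coe_linear_map]

theorem lie_shift_shift (n m : ℂ) : ⁅shift n, shift m⁆ = 0 :=
  LinearMap.ext fun f => funext fun s => by simp [Ring.lie_def, sub_right_comm]

theorem lie_shift_pointwise (n : ℂ) (φ : Module.End ℂ P) : ⁅shift n, pointwise φ⁆ = 0 :=
  LinearMap.ext fun f => funext fun s => by simp [Ring.lie_def]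

theorem lie_coordMul_shift (n : ℂ) : ⁅coordMul, shift n⁆ = n • shift n :=
  LinearMap.ext fun f => funext fun s => by simp [Ring.lie_def, ← sub_smul]

theorem lie_coordMul_pointwise (φ : Module.End ℂ P) : ⁅coordMul, pointwise φ⁆ = 0 :=
  LinearMap.ext fun f => funext fun s => by simp [Ring.lie_def]

variable (η : ℕ+ → ℂ) (a : ℂ)

noncomputable def xOp (n : ℕ+) : Module.End ℂ V := η n • shift n + a • pointwise (∂ n)

noncomputable def mulOp : P →ₐ[ℂ] Module.End ℂ V := pointwise.comp (Algebra.lmul ℂ P)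

noncomputable def dOp : Module.End ℂ V := coordMul - pointwise euler

@[simp] theorem mulOp_apply (p : P) (f : V) (s : ℂ) : mulOp p f s = p * f s := rfl

theorem xOp_one (n : ℕ+) : xOp η a n 1 = η n • 1 :=
  funext fun s => by simp [xOp]

theorem lie_xOp_xOp (n n' : ℕ+) : ⁅xOp η a n, xOp η a n'⁆ = 0 := by
  simp only [xOp, add_lie, lie_add, Module.End.smul_lie, Module.End.lie_smul, lie_shift_shift,
    lie_shift_pointwise, ← lie_skew (pointwise _) (shift _), lie_pointwise_derivation,
    lie_pderiv_pderiv]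
  simp

theorem lie_xOp_mulOp_X (n m : ℕ+) :
    ⁅xOp η a n, mulOp (X m)⁆ = if n = m then a • 1 else 0 := by
  simp only [xOp, mulOp, AlgHom.comp_apply, add_lie, Module.End.smul_lie, lie_shift_pointwise,
    ← pointwise_lie, lie_derivation_lmul, smul_zero, zero_add]
  rcases eq_or_ne n m with rfl | h
  · rw [pderiv_X_self, map_one, map_one, if_pos rfl]
  · rw [pderiv_X_of_ne h.symm, map_zero, map_zero, smul_zero, if_neg h]

theorem lie_mulOp_mulOp (p q : P) : ⁅mulOp p, mulOp q⁆ = 0 := by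
  rw [mulOp, AlgHom.comp_apply, AlgHom.comp_apply, ← pointwise_lie, lie_lmul_lmul, map_zero]

theorem lie_dOp_xOp (n : ℕ+) : ⁅dOp, xOp η a n⁆ = (n : ℂ) • xOp η a n := by
  simp only [dOp, xOp, sub_lie, lie_add, Module.End.lie_smul, lie_coordMul_shift,
    lie_coordMul_pointwise, ← lie_skew (pointwise _) (shift _), lie_shift_pointwise,
    lie_pointwise_derivation, lie_euler_pderiv]
  rw [Derivation.coe_smul_linearMap, map_smul]
  module

theorem lie_dOp_mulOp_X (m : ℕ+) : ⁅dOp, mulOp (X m)⁆ = -(m : ℂ) • mulOp (X m) := by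
  rw [dOp, sub_lie, mulOp, AlgHom.comp_apply, lie_coordMul_pointwise, ← pointwise_lie,
    lie_derivation_lmul, euler_X, map_smul, map_smul, zero_sub]
  module

theorem exists_lieHom {L : Type*} [LieRing L] [LieAlgebra ℂ L] (x y : ℕ+ → L) (c d : L)
    (basis : Module.Basis (ℕ+ ⊕ ℕ+ ⊕ Unit ⊕ Unit) ℂ L)
    (hbasis : ⇑basis = Sum.elim x (Sum.elim y (Sum.elim (fun _ => c) fun _ => d)))
    (hxx : ∀ m n, ⁅x m, x n⁆ = 0) (hyy : ∀ m n, ⁅y m, y n⁆ = 0)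
    (hxy : ∀ m n, ⁅x m, y n⁆ = if m = n then c else 0) (hc : ∀ z : L, ⁅c, z⁆ = 0)
    (hdx : ∀ n, ⁅d, x n⁆ = (n : ℂ) • x n) (hdy : ∀ n, ⁅d, y n⁆ = -(n : ℂ) • y n) :
    ∃ ρ : L →ₗ⁅ℂ⁆ Module.End ℂ V,
      (∀ n, ρ (x n) = xOp η a n) ∧ (∀ m, ρ (y m) = mulOp (X m)) ∧ ρ c = a • 1 := by
  set F := basis.constr ℂ
    (Sum.elim (xOp η a) (Sum.elim (fun m => mulOp (X m)) (Sum.elim (fun _ => a • 1) fun _ => dOp)))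
  have hF : ∀ i, F (basis i) = _ := basis.constr_basis ℂ _
  simp only [hbasis, Sum.forall, Sum.elim_inl, Sum.elim_inr] at hF
  obtain ⟨hFx, hFy, hFc, hFd⟩ := hF
  have hskew {u v : L} (h : F ⁅u, v⁆ = ⁅F u, F v⁆) : F ⁅v, u⁆ = ⁅F v, F u⁆ := by
    rw [← lie_skew, map_neg, h, lie_skew]
  have hcz (z : L) : F ⁅c, z⁆ = ⁅F c, F z⁆ := by
    rw [hc, map_zero, hFc (), Module.End.smul_lie, commute_iff_lie_eq.mp (Commute.one_left _),
      smul_zero]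
  have hxx' (n n' : ℕ+) : F ⁅x n, x n'⁆ = ⁅F (x n), F (x n')⁆ := by
    rw [hxx, map_zero, hFx, hFx, lie_xOp_xOp]
  have hxy' (n m : ℕ+) : F ⁅x n, y m⁆ = ⁅F (x n), F (y m)⁆ := by
    rw [hxy, hFx, hFy, lie_xOp_mulOp_X, apply_ite F, map_zero, hFc ()]
  have hyy' (m m' : ℕ+) : F ⁅y m, y m'⁆ = ⁅F (y m), F (y m')⁆ := by
    rw [hyy, map_zero, hFy, hFy, lie_mulOp_mulOp]
  have hdx' (n : ℕ+) : F ⁅d, x n⁆ = ⁅F d, F (x n)⁆ := by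
    rw [hdx, map_smul, hFd (), hFx, lie_dOp_xOp]
  have hdy' (m : ℕ+) : F ⁅d, y m⁆ = ⁅F d, F (y m)⁆ := by
    rw [hdy, map_smul, hFd (), hFy, lie_dOp_mulOp_X]
  refine ⟨{ F with map_lie' := fun {u v} => F.map_lie_of_basis basis ?_ u v }, hFx, hFy, hFc ()⟩
  rintro (n | m | ⟨⟩ | ⟨⟩) (n' | m' | ⟨⟩ | ⟨⟩) <;> simp only [hbasis, Sum.elim_inl, Sum.elim_inr]
  exacts [hxx' n n', hxy' n m', hskew (hcz _), hskew (hdx' n), hskew (hxy' n' m), hyy' m m',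
    hskew (hcz _), hskew (hdy' m), hcz _, hcz _, hcz _, hcz _, hdx' n', hdy' m', hskew (hcz _),
    by rw [lie_self, lie_self, map_zero]]

end WhittakerModel

section Heisenberg

open Polynomial Submodule.Quotient

attribute [local instance 100] LieRing.ofAssociativeRing

variable {L : Type*} [LieRing L] [LieAlgebra ℂ L]

local notation "U" => UniversalEnvelopingAlgebra ℂ L

noncomputable def yEval {y : ℕ+ → L} (hyy : ∀ m n, ⁅y m, y n⁆ = 0) :
    MvPolynomial ℕ+ ℂ →ₐ[ℂ] U :=
  MvPolynomial.aevalOfCommute (fun m => ι ℂ (y m)) fun m n => by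
    rw [commute_iff_lie_eq, ← LieHom.map_lie, hyy, map_zero]

@[simp] theorem yEval_X {y : ℕ+ → L} (hyy : ∀ m n, ⁅y m, y n⁆ = 0) (m : ℕ+) :
    yEval hyy (MvPolynomial.X m) = ι ℂ (y m) :=
  MvPolynomial.aevalOfCommute_X _ _ m

theorem yEval_mem_adjoin {y : ℕ+ → L} (hyy : ∀ m n, ⁅y m, y n⁆ = 0) (p : MvPolynomial ℕ+ ℂ) :
    yEval hyy p ∈ Algebra.adjoin ℂ (Set.range fun m => ι ℂ (y m)) :=
  MvPolynomial.aevalOfCommute_mem_adjoin _ _ p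

theorem ι_mul_yEval_sub {x y : ℕ+ → L} {c : L} (hyy : ∀ m n, ⁅y m, y n⁆ = 0)
    (hxy : ∀ m n, ⁅x m, y n⁆ = if m = n then c else 0) (hc : ∀ z : L, ⁅c, z⁆ = 0) (n : ℕ+)
    (p : MvPolynomial ℕ+ ℂ) :
    ι ℂ (x n) * yEval hyy p - yEval hyy p * ι ℂ (x n) =
      ι ℂ c * yEval hyy (MvPolynomial.pderiv n p) := by
  refine mul_sub_mul_eq_of_derivation _ _ (fun _ => commute_ι_of_forall_lie_eq_zero hc _)
    (fun m => ?_) p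
  rw [yEval_X, ι_mul_sub_mul, hxy]
  rcases eq_or_ne n m with rfl | h
  · rw [if_pos rfl, MvPolynomial.pderiv_X_self, map_one, mul_one]
  · rw [if_neg h, map_zero, MvPolynomial.pderiv_X_of_ne h.symm, map_zero, mul_zero]

theorem commute_ι_yEval_of_notMem_vars {x y : ℕ+ → L} {c : L} (hyy : ∀ m n, ⁅y m, y n⁆ = 0)
    (hxy : ∀ m n, ⁅x m, y n⁆ = if m = n then c else 0) (hc : ∀ z : L, ⁅c, z⁆ = 0) {n : ℕ+}
    {p : MvPolynomial ℕ+ ℂ} (hn : n ∉ p.vars) : Commute (ι ℂ (x n)) (yEval hyy p) := by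
  rw [commute_iff_eq, ← sub_eq_zero, ι_mul_yEval_sub hyy hxy hc,
    MvPolynomial.pderiv_eq_zero_of_notMem_vars hn, map_zero, mul_zero]

theorem exists_forall_commute_ι_yEval_coeff {x y : ℕ+ → L} {c : L}
    (hyy : ∀ m n, ⁅y m, y n⁆ = 0) (hxy : ∀ m n, ⁅x m, y n⁆ = if m = n then c else 0)
    (hc : ∀ z : L, ⁅c, z⁆ = 0) {η : ℕ+ → ℂ} (hη : {n : ℕ+ | η n ≠ 0}.Infinite)
    (F : (MvPolynomial ℕ+ ℂ)[X]) :
    ∃ n, η n ≠ 0 ∧ ∀ j, Commute (ι ℂ (x n)) (yEval hyy (F.coeff j)) := by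
  obtain ⟨n, hηn, hnF⟩ := hη.exists_notMem_finset (F.support.biUnion fun j => (F.coeff j).vars)
  refine ⟨n, hηn, fun j => commute_ι_yEval_of_notMem_vars hyy hxy hc fun hn => hnF ?_⟩
  by_cases hj : j ∈ F.support
  · exact Finset.mem_biUnion.2 ⟨j, hj, hn⟩
  · simp [notMem_support_iff.1 hj] at hn

theorem pbwRange_eq_top {x y : ℕ+ → L} {c d : L}
    (basis : Module.Basis (ℕ+ ⊕ ℕ+ ⊕ Unit ⊕ Unit) ℂ L)
    (hbasis : ⇑basis = Sum.elim x (Sum.elim y (Sum.elim (fun _ => c) fun _ => d)))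
    (hyy : ∀ m n, ⁅y m, y n⁆ = 0) (hxy : ∀ m n, ⁅x m, y n⁆ = if m = n then c else 0)
    (hc : ∀ z : L, ⁅c, z⁆ = 0) (hdx : ∀ n, ⁅d, x n⁆ = (n : ℂ) • x n)
    (hdy : ∀ n, ⁅d, y n⁆ = -(n : ℂ) • y n) {η : ℕ+ → ℂ} {a : ℂ} {I : Submodule U U}
    (hIx : ∀ n, ι ℂ (x n) - algebraMap ℂ U (η n) ∈ I) (hIc : ι ℂ c - algebraMap ℂ U a ∈ I) :
    pbwRange I (ι ℂ d) (yEval hyy).toLinearMap = ⊤ := by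
  set δ := ι ℂ d
  set σ := yEval hyy
  set N := pbwRange I δ σ.toLinearMap
  have hshift {z : L} {s : ℂ} (hz : ⁅d, z⁆ = s • z) (j : ℕ) (u : U) :
      ι ℂ z * (δ ^ j * u) = aeval δ (taylor (-s) (X ^ j)) * (ι ℂ z * u) := by
    have h : δ * ι ℂ z - ι ℂ z * δ = s • ι ℂ z := by rw [ι_mul_sub_mul, hz, map_smul]
    rw [← mul_assoc, ← aeval_X_pow (R := ℂ), mul_aeval_eq_aeval_taylor_mul h, mul_assoc]
  have hgen (i) (j : ℕ) (p : MvPolynomial ℕ+ ℂ) : ι ℂ (basis i) • mk (δ ^ j * σ p) ∈ N := by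
    rw [← mk_smul, smul_eq_mul]
    rcases i with n | m | ⟨⟩ | ⟨⟩ <;> simp only [hbasis, Sum.elim_inl, Sum.elim_inr]
    · rw [hshift (hdx n), ← sub_add_cancel (ι ℂ (x n) * σ p) (σ p * ι ℂ (x n)),
        ι_mul_yEval_sub hyy hxy hc, (commute_ι_of_forall_lie_eq_zero hc _).eq, mul_add,
        ← mul_assoc, ← mul_assoc, mk_add, mk_mul_of_sub_algebraMap_mem hIc,
        mk_mul_of_sub_algebraMap_mem (hIx n)]
      exact add_mem (N.smul_mem _ (mk_aeval_mul_mem_pbwRange _ _ _ _ _))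
        (N.smul_mem _ (mk_aeval_mul_mem_pbwRange _ _ _ _ _))
    · rw [hshift (hdy m), ← yEval_X hyy, ← map_mul]
      exact mk_aeval_mul_mem_pbwRange _ _ _ _ _
    · rw [(commute_ι_of_forall_lie_eq_zero hc _).eq, mk_mul_of_sub_algebraMap_mem hIc]
      exact N.smul_mem _ (mk_pow_mul_mem_pbwRange _ _ _ j p)
    · rw [← mul_assoc, ← pow_succ']
      exact mk_pow_mul_mem_pbwRange _ _ _ (j + 1) p
  refine eq_top_iff.2 fun w _ => ?_
  obtain ⟨u, rfl⟩ := mk_surjective I w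
  have h1 : (mk 1 : U ⧸ I) ∈ N := by simpa using mk_pow_mul_mem_pbwRange I δ σ.toLinearMap 0 1
  have h := smul_mem_of_forall_ι_basis_smul_mem basis
    (fun i _ hw => smul_mem_pbwRange I δ σ.toLinearMap (hgen i) hw) u h1
  rwa [← mk_smul, smul_eq_mul, mul_one] at h

theorem yEval_eq_zero_of_mk_eq_zero {x y : ℕ+ → L} {c d : L}
    (basis : Module.Basis (ℕ+ ⊕ ℕ+ ⊕ Unit ⊕ Unit) ℂ L)
    (hbasis : ⇑basis = Sum.elim x (Sum.elim y (Sum.elim (fun _ => c) fun _ => d)))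
    (hxx : ∀ m n, ⁅x m, x n⁆ = 0) (hyy : ∀ m n, ⁅y m, y n⁆ = 0)
    (hxy : ∀ m n, ⁅x m, y n⁆ = if m = n then c else 0) (hc : ∀ z : L, ⁅c, z⁆ = 0)
    (hdx : ∀ n, ⁅d, x n⁆ = (n : ℂ) • x n) (hdy : ∀ n, ⁅d, y n⁆ = -(n : ℂ) • y n)
    {η : ℕ+ → ℂ} {a : ℂ} {I : Submodule U U}
    (hI : I ≤ Submodule.span U
      ((Set.range fun n => ι ℂ (x n) - algebraMap ℂ U (η n)) ∪ {ι ℂ c - algebraMap ℂ U a}))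
    {p : MvPolynomial ℕ+ ℂ} (hp : (mk (yEval hyy p) : U ⧸ I) = 0) : p = 0 := by
  obtain ⟨ρ, hρx, hρy, hρc⟩ :=
    WhittakerModel.exists_lieHom η a x y c d basis hbasis hxx hyy hxy hc hdx hdy
  have hρσ : (lift ℂ ρ).comp (yEval hyy) = WhittakerModel.mulOp :=
    MvPolynomial.algHom_ext fun m => by simp [hρy]
  have hker : ∀ u ∈ Submodule.span U
      ((Set.range fun n => ι ℂ (x n) - algebraMap ℂ U (η n)) ∪ {ι ℂ c - algebraMap ℂ U a}),
      lift ℂ ρ u 1 = 0 := fun u hu => by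
    induction hu using Submodule.span_induction with
    | mem g hg =>
      rcases hg with ⟨n, rfl⟩ | rfl
      · simp [hρx, WhittakerModel.xOp_one]
      · simp [hρc]
    | zero => simp
    | add u v _ _ hu hv => rw [map_add, LinearMap.add_apply, hu, hv, add_zero]
    | smul v u _ hu => rw [smul_eq_mul, map_mul, Module.End.mul_apply, hu, map_zero]
  have h := congrFun (hker _ (hI ((mk_eq_zero I).1 hp))) 0
  rwa [← AlgHom.comp_apply, hρσ, WhittakerModel.mulOp_apply, Pi.one_apply, mul_one] at h

end Heisenberg

theorem extended_heisenberg_degree_reduction_general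
    {L : Type*} [LieRing L] [LieAlgebra ℂ L]
    (X Y : ℕ+ → L) (c d : L)
    (basis : Module.Basis (ℕ+ ⊕ ℕ+ ⊕ Unit ⊕ Unit) ℂ L)
    (hbasis : ⇑basis = Sum.elim X (Sum.elim Y (Sum.elim (fun _ => c) fun _ => d)))
    (hXX : ∀ m n, ⁅X m, X n⁆ = 0)
    (hYY : ∀ m n, ⁅Y m, Y n⁆ = 0)
    (hXY : ∀ m n, ⁅X m, Y n⁆ = if m = n then c else 0)
    (hc : ∀ z : L, ⁅c, z⁆ = 0)
    (hdX : ∀ n, ⁅d, X n⁆ = (n : ℂ) • X n)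
    (hdY : ∀ n, ⁅d, Y n⁆ = -(n : ℂ) • Y n)
    (η : ℕ+ → ℂ) (a : ℂ)
    (I : Submodule (UniversalEnvelopingAlgebra ℂ L) (UniversalEnvelopingAlgebra ℂ L))
    (hI : I = Submodule.span (UniversalEnvelopingAlgebra ℂ L)
      ((Set.range fun n => ι ℂ (X n) - algebraMap ℂ (UniversalEnvelopingAlgebra ℂ L) (η n)) ∪
        {ι ℂ c - algebraMap ℂ (UniversalEnvelopingAlgebra ℂ L) a})) :
    -- (a) degree reduction in `d`:
    (∀ (n : ℕ+) (k : ℕ) (z : UniversalEnvelopingAlgebra ℂ L),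
      z ∈ Algebra.adjoin ℂ (Set.range fun m => ι ℂ (Y m)) →
      Commute (ι ℂ (X n)) z →
      ∃ f : ℕ → ℂ,
        (ι ℂ (X n) - algebraMap ℂ (UniversalEnvelopingAlgebra ℂ L) (η n)) •
            (Submodule.Quotient.mk ((ι ℂ d) ^ k * z) : UniversalEnvelopingAlgebra ℂ L ⧸ I) =
          ∑ j ∈ Finset.range k, (η n * f j) •
            (Submodule.Quotient.mk ((ι ℂ d) ^ j * z) :
              UniversalEnvelopingAlgebra ℂ L ⧸ I)) ∧
    -- (b) consequence:
    ({n : ℕ+ | η n ≠ 0}.Infinite → a ≠ 0 →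
      ∀ w : UniversalEnvelopingAlgebra ℂ L ⧸ I, w ≠ 0 →
        ∃ u ∈ Algebra.adjoin ℂ ({ι ℂ d} ∪ Set.range fun n => ι ℂ (X n)),
          u • w ≠ 0 ∧
          ∃ b ∈ Algebra.adjoin ℂ (Set.range fun m => ι ℂ (Y m)),
            u • w = Submodule.Quotient.mk b) := by
  have hIx (n : ℕ+) : ι ℂ (X n) - algebraMap ℂ (UniversalEnvelopingAlgebra ℂ L) (η n) ∈ I :=
    hI ▸ Submodule.subset_span (Or.inl ⟨n, rfl⟩)
  have hIc : ι ℂ c - algebraMap ℂ (UniversalEnvelopingAlgebra ℂ L) a ∈ I :=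
    hI ▸ Submodule.subset_span (Or.inr rfl)
  have hdX' (n : ℕ+) : ι ℂ d * ι ℂ (X n) - ι ℂ (X n) * ι ℂ d = (n : ℂ) • ι ℂ (X n) := by
    rw [UniversalEnvelopingAlgebra.ι_mul_sub_mul, hdX, map_smul]
  refine ⟨fun n k z _ hz => ⟨_, Submodule.Quotient.sub_smul_mk_pow_mul (hdX' n) hz (hIx n) k⟩,
    fun hinf _ w hw => ?_⟩
  obtain ⟨F, rfl⟩ := (mem_pbwRange_iff _ _ _).1
    ((pbwRange_eq_top basis hbasis hYY hXY hc hdX hdY hIx hIc).ge (Submodule.mem_top (x := w)))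
  have hF : F ≠ 0 := by rintro rfl; simp at hw
  obtain ⟨n, hηn, hcomm⟩ := exists_forall_commute_ι_yEval_coeff hYY hXY hc hinf F
  have hu := Submodule.Quotient.sub_pow_natDegree_smul_mk_pbwEval (yEval hYY).toLinearMap
    (hdX' n) (hIx n) F hcomm
  refine ⟨_, pow_mem (sub_mem (Algebra.subset_adjoin (Set.mem_union_right _ (Set.mem_range_self n)))
    (Subalgebra.algebraMap_mem _ _)) _, fun h => ?_, _,
    yEval_mem_adjoin hYY _, hu⟩
  refine smul_ne_zero ?_ (Polynomial.leadingCoeff_ne_zero.2 hF)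
    (yEval_eq_zero_of_mk_eq_zero basis hbasis hXX hYY hXY hc hdX hdY hI.le (hu ▸ h))
  simp [hηn, Nat.factorial_ne_zero]

/-- In the extended Heisenberg Whittaker module `M̃_{η,a}`, for `x = x_n`
commuting with `z ∈ U(G₋)`, the element `(x − η(x))·(d^k z v)` is a linear combination of
the `d^j z v` with `j < k` and coefficients proportional to `η(x)`.  Consequently, if
`η(x_n) ≠ 0` for infinitely many `n` (and `a ≠ 0`), every nonzero `w ∈ M̃_{η,a}` can be
moved by some `u ∈ U(G₊ ⊕ ℂd)` to a nonzero element of `U(G₋)·v`. -/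
theorem extended_heisenberg_degree_reduction
    {L : Type*} [LieRing L] [LieAlgebra ℂ L]
    (X Y : ℕ+ → L) (c d : L)
    (basis : Module.Basis (ℕ+ ⊕ ℕ+ ⊕ Unit ⊕ Unit) ℂ L)
    (hbasis : ⇑basis = Sum.elim X (Sum.elim Y (Sum.elim (fun _ => c) fun _ => d)))
    (hXX : ∀ m n, ⁅X m, X n⁆ = 0)
    (hYY : ∀ m n, ⁅Y m, Y n⁆ = 0)
    (hXY : ∀ m n, ⁅X m, Y n⁆ = if m = n then c else 0)
    (hc : ∀ z : L, ⁅c, z⁆ = 0)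
    (hdX : ∀ n, ⁅d, X n⁆ = (n : ℂ) • X n)
    (hdY : ∀ n, ⁅d, Y n⁆ = -(n : ℂ) • Y n)
    (hdc : ⁅d, c⁆ = 0)
    (η : ℕ+ → ℂ) (a : ℂ)
    (I : Submodule (UniversalEnvelopingAlgebra ℂ L) (UniversalEnvelopingAlgebra ℂ L))
    (hI : I = Submodule.span (UniversalEnvelopingAlgebra ℂ L)
      ((Set.range fun n => ι ℂ (X n) - algebraMap ℂ (UniversalEnvelopingAlgebra ℂ L) (η n)) ∪
        {ι ℂ c - algebraMap ℂ (UniversalEnvelopingAlgebra ℂ L) a})) :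
    -- (a) degree reduction in `d`:
    (∀ (n : ℕ+) (k : ℕ) (z : UniversalEnvelopingAlgebra ℂ L),
      z ∈ Algebra.adjoin ℂ (Set.range fun m => ι ℂ (Y m)) →
      Commute (ι ℂ (X n)) z →
      ∃ f : ℕ → ℂ,
        (ι ℂ (X n) - algebraMap ℂ (UniversalEnvelopingAlgebra ℂ L) (η n)) •
            (Submodule.Quotient.mk ((ι ℂ d) ^ k * z) : UniversalEnvelopingAlgebra ℂ L ⧸ I) =
          ∑ j ∈ Finset.range k, (η n * f j) •
            (Submodule.Quotient.mk ((ι ℂ d) ^ j * z) :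
              UniversalEnvelopingAlgebra ℂ L ⧸ I)) ∧
    -- (b) consequence:
    ({n : ℕ+ | η n ≠ 0}.Infinite → a ≠ 0 →
      ∀ w : UniversalEnvelopingAlgebra ℂ L ⧸ I, w ≠ 0 →
        ∃ u ∈ Algebra.adjoin ℂ ({ι ℂ d} ∪ Set.range fun n => ι ℂ (X n)),
          u • w ≠ 0 ∧
          ∃ b ∈ Algebra.adjoin ℂ (Set.range fun m => ι ℂ (Y m)),
            u • w = Submodule.Quotient.mk b) :=
  extended_heisenberg_degree_reduction_general X Y c d basis hbasis hXX hYY hXY hc hdX hdY η a I hI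
end

section
/- Let 𝔩₀ and 𝔤' be Lie algebras with a common one-dimensional center ℂc, 𝔩 = (𝔩₀ + 𝔤')/(identifying centers), with [𝔩₀, 𝔤'] = 0. Let V be an irreducible 𝔩-module on which c acts by a ∈ ℂ, and suppose S ⊆ V is an irreducible 𝔤'-submodule with End_{𝔤'}(S) = ℂ. Then V ≅ M ⊗ S for some irreducible 𝔩₀-module M with c acting by a. -/
open TensorProduct

/-!
Since every `B`-endomorphism of `S` is a scalar, the Jacobson density theorem lets an element
of `B` act on finitely many vectors of `S` as any prescribed `K`-linear map. Feeding
`s ↦ 𝒞.coord j s • v` into a relation `∑ᵢ gᵢ (𝒞 i) = 0` isolates `g_j v`, so evaluation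
`Hom_B(S, V) ⊗ S → V` is injective. For a nonzero `A`-submodule `N` of `Hom_B(S, V)`, the span of
the values `f s` with `f ∈ N` is stable under `A` and `B`, hence all of `V`: for `N = ⊤` this is
surjectivity of evaluation, and in general it forces `N ⊗ S` to be everything, so contracting the
`S` factor against a functional with `φ s₀ = 1` puts every `g = (id ⊗ φ) (g ⊗ s₀)` into `N`.
-/

theorem Submodule.smul_mem_span_of_forall_smul_mem {R K V : Type*} [CommSemiring K] [Monoid R]
    [AddCommMonoid V] [Module K V] [DistribMulAction R V] [SMulCommClass R K V] {X : Set V}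
    (hX : ∀ (r : R), ∀ v ∈ X, r • v ∈ X) (r : R) {v : V} (hv : v ∈ Submodule.span K X) :
    r • v ∈ Submodule.span K X := by
  have : (Submodule.span K X).map (DistribSMul.toLinearMap K V r) ≤ Submodule.span K X := by
    rw [Submodule.map_span]
    exact Submodule.span_mono (by rintro _ ⟨w, hw, rfl⟩; exact hX r w hw)
  exact this ⟨v, hv, rfl⟩

theorem exists_smul_eq_of_forall_end_eq_smul {K B S : Type*} [Field K] [Ring B] [AddCommGroup S]
    [Module K S] [Module B S] [IsSemisimpleModule B S]
    (hEnd : ∀ g : Module.End B S, ∃ z : K, ∀ s, g s = z • s) (f : S →ₗ[K] S) (t : Finset S) :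
    ∃ b : B, ∀ s ∈ t, f s = b • s := by
  let f' : Module.End (Module.End B S) S :=
    { toFun := f
      map_add' := f.map_add
      map_smul' := fun g s => by
        obtain ⟨z, hz⟩ := hEnd g
        simp [Module.End.smul_def, hz] }
  exact jacobson_density f' t

def IsJointlyIrreducible (K A B V : Type*) [Semiring K] [AddCommMonoid V] [Module K V] [SMul A V]
    [SMul B V] : Prop :=
  ∀ p : Submodule K V, (∀ (x : A) (v : V), v ∈ p → x • v ∈ p) →
    (∀ (b : B) (v : V), v ∈ p → b • v ∈ p) → p = ⊥ ∨ p = ⊤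

section

variable {K A B S V : Type*} [Field K] [Ring A] [Algebra K A] [Ring B] [Algebra K B]
  [AddCommGroup V] [Module K V] [Module A V] [Module B V] [IsScalarTower K A V]
  [IsScalarTower K B V] [SMulCommClass B A V] [AddCommGroup S] [Module B S]

theorem span_image2_apply_eq_top (hirr : IsJointlyIrreducible K A B V)
    {N : Submodule A (S →ₗ[B] V)} (hN : N ≠ ⊥) :
    Submodule.span K (Set.image2 (fun (f : S →ₗ[B] V) s => f s) N Set.univ) = ⊤ := by
  refine (hirr _ (Submodule.smul_mem_span_of_forall_smul_mem ?_)
    (Submodule.smul_mem_span_of_forall_smul_mem ?_)).resolve_left ?_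
  · rintro x _ ⟨f, hf, s, -, rfl⟩
    exact ⟨x • f, N.smul_mem x hf, s, trivial, rfl⟩
  · rintro b _ ⟨f, hf, s, -, rfl⟩
    exact ⟨f, hf, b • s, trivial, map_smul f b s⟩
  · obtain ⟨f, hf, hf0⟩ := Submodule.exists_mem_ne_zero_of_ne_bot hN
    obtain ⟨s, hs⟩ := DFunLike.ne_iff.mp hf0
    exact Submodule.ne_bot_iff _ |>.mpr ⟨f s, Submodule.subset_span ⟨f, hf, s, trivial, rfl⟩, hs⟩

variable [Module K S] [IsScalarTower K B S]

variable (K B S V) in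
noncomputable def evalTensor : (S →ₗ[B] V) ⊗[K] S →ₗ[K] V :=
  TensorProduct.lift (LinearMap.restrictScalarsₗ K B S V K)

@[simp]
theorem evalTensor_tmul (f : S →ₗ[B] V) (s : S) : evalTensor K B S V (f ⊗ₜ s) = f s := rfl

theorem evalTensor_injective [IsSemisimpleModule B S]
    (hEnd : ∀ g : Module.End B S, ∃ z : K, ∀ s, g s = z • s) :
    Function.Injective (evalTensor K B S V) := by
  classical
  rw [injective_iff_map_eq_zero]
  intro t ht
  let 𝒞 := Module.Basis.ofVectorSpace K S
  obtain ⟨g, rfl⟩ := TensorProduct.eq_repr_basis_right 𝒞 t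
  suffices g = 0 by simp [this]
  ext j v
  obtain ⟨b, hb⟩ := exists_smul_eq_of_forall_end_eq_smul hEnd ((𝒞.coord j).smulRight v)
    (g.support.image 𝒞)
  calc g j v = g.sum fun i f => f (𝒞.coord j (𝒞 i) • v) := by
        simp +contextual [Finsupp.single_apply, ite_smul, apply_ite]
    _ = g.sum fun i f => b • f (𝒞 i) :=
        Finsupp.sum_congr fun i hi => by
          rw [← map_smul, ← hb _ (Finset.mem_image_of_mem _ hi)]
          rfl
    _ = b • evalTensor K B S V (g.sum fun i f => f ⊗ₜ 𝒞 i) := by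
        rw [map_finsuppSum, Finsupp.smul_sum]
        rfl
    _ = 0 := by rw [ht, smul_zero]

theorem evalTensor_surjective (hirr : IsJointlyIrreducible K A B V)
    [Nontrivial (S →ₗ[B] V)] : Function.Surjective (evalTensor K B S V) := by
  rw [← LinearMap.range_eq_top, eq_top_iff,
    ← span_image2_apply_eq_top hirr (N := (⊤ : Submodule A (S →ₗ[B] V))) top_ne_bot,
    Submodule.span_le]
  rintro _ ⟨f, -, s, -, rfl⟩
  exact ⟨f ⊗ₜ s, rfl⟩

theorem span_image2_tmul_eq_top [IsSemisimpleModule B S]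
    (hEnd : ∀ g : Module.End B S, ∃ z : K, ∀ s, g s = z • s) (hirr : IsJointlyIrreducible K A B V)
    {N : Submodule A (S →ₗ[B] V)} (hN : N ≠ ⊥) :
    Submodule.span K (Set.image2 (· ⊗ₜ[K] ·) (N : Set (S →ₗ[B] V)) (Set.univ : Set S)) = ⊤ := by
  rw [← Submodule.comap_map_eq_of_injective (evalTensor_injective (V := V) hEnd)
    (Submodule.span K _), Submodule.map_span, Set.image_image2]
  simp only [evalTensor_tmul]
  rw [span_image2_apply_eq_top hirr hN, Submodule.comap_top]

theorem isSimpleModule_linearMap [IsSemisimpleModule B S]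
    (hEnd : ∀ g : Module.End B S, ∃ z : K, ∀ s, g s = z • s) (hirr : IsJointlyIrreducible K A B V)
    [Nontrivial (S →ₗ[B] V)] : IsSimpleModule A (S →ₗ[B] V) := by
  obtain ⟨f₀, hf₀⟩ := exists_ne (0 : S →ₗ[B] V)
  obtain ⟨s₀, hf₀s₀⟩ := DFunLike.ne_iff.mp hf₀
  have hs₀ : s₀ ≠ 0 := fun h => hf₀s₀ (by simp [h])
  obtain ⟨φ, hφ⟩ := Module.Projective.exists_dual_eq_one K hs₀
  let Φ : (S →ₗ[B] V) ⊗[K] S →ₗ[K] (S →ₗ[B] V) :=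
    (TensorProduct.rid K _).toLinearMap ∘ₗ φ.lTensor _
  refine { eq_bot_or_eq_top := fun N => or_iff_not_imp_left.mpr fun hN =>
    Submodule.eq_top_iff'.mpr fun g => ?_ }
  have hle : (Submodule.span K (Set.image2 (· ⊗ₜ[K] ·) (N : Set (S →ₗ[B] V)) Set.univ)).map Φ ≤
      N.restrictScalars K := by
    rw [Submodule.map_span, Submodule.span_le]
    rintro _ ⟨_, ⟨f, hf, s, -, rfl⟩, rfl⟩
    simpa [Φ] using N.smul_mem (algebraMap K A (φ s)) hf
  have hmem : g ⊗ₜ[K] s₀ ∈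
      Submodule.span K (Set.image2 (· ⊗ₜ[K] ·) (N : Set (S →ₗ[B] V)) Set.univ) := by
    rw [span_image2_tmul_eq_top hEnd hirr hN]
    trivial
  simpa [Φ, hφ] using hle (Submodule.mem_map_of_mem hmem)

end

theorem irreducible_module_factors_as_tensor_general
    {A B V : Type*}
    [Ring A] [Algebra ℂ A] [Ring B] [Algebra ℂ B]
    [AddCommGroup V] [Module ℂ V] [Module A V] [Module B V]
    [IsScalarTower ℂ A V] [IsScalarTower ℂ B V]
    [SMulCommClass B A V]
    (cA : A)
    (a : ℂ) (hcAact : ∀ v : V, cA • v = a • v)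
    (hirr : ∀ p : Submodule ℂ V,
      (∀ (x : A) (v : V), v ∈ p → x • v ∈ p) →
      (∀ (b : B) (v : V), v ∈ p → b • v ∈ p) → p = ⊥ ∨ p = ⊤)
    (S : Submodule B V)
    (hS : IsSimpleModule B S)
    (hEnd : ∀ f : S →ₗ[B] S, ∃ z : ℂ, ∀ s : S, f s = z • s) :
    IsSimpleModule A (S →ₗ[B] V) ∧
      (∀ (f : S →ₗ[B] V) (s : S), (cA • f) s = a • f s) ∧
      ∃ e : ((S →ₗ[B] V) ⊗[ℂ] S) ≃ₗ[ℂ] V,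
        (∀ (f : S →ₗ[B] V) (s : S), e (f ⊗ₜ s) = f s) ∧
        (∀ (x : A) (f : S →ₗ[B] V) (s : S), e ((x • f) ⊗ₜ s) = x • e (f ⊗ₜ s)) ∧
        (∀ (b : B) (f : S →ₗ[B] V) (s : S), e (f ⊗ₜ (b • s)) = b • e (f ⊗ₜ s)) := by
  have : Nontrivial S := hS.nontrivial
  have : Nontrivial (S →ₗ[B] V) :=
    nontrivial_of_ne _ _ (LinearMap.ne_zero_of_injective S.injective_subtype)
  let e := LinearEquiv.ofBijective (evalTensor ℂ B S V)
    ⟨evalTensor_injective hEnd, evalTensor_surjective hirr⟩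
  exact ⟨isSimpleModule_linearMap hEnd hirr, fun f s => hcAact (f s), e, fun _ _ => rfl,
    fun _ _ _ => rfl, fun b f s => map_smul f b s⟩

/-- Let `𝔩₀` and `𝔤'` have commuting actions on `V` (encoded via their
enveloping algebras `A`, `B`), with central elements `cA ∈ A`, `cB ∈ B` representing the
identified central element `c` and acting on `V` by the same scalar `a`.  If `V` is
irreducible under the joint action, and `S ⊆ V` is an irreducible `B`-submodule with
`End_B(S) = ℂ`, then `V ≅ M ⊗ S` for the irreducible `A`-module `M = Hom_B(S, V)` on
which `c` acts by `a`, via the (equivariant) evaluation isomorphism. -/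
theorem irreducible_module_factors_as_tensor
    {A B V : Type*}
    [Ring A] [Algebra ℂ A] [Ring B] [Algebra ℂ B]
    [AddCommGroup V] [Module ℂ V] [Module A V] [Module B V]
    [IsScalarTower ℂ A V] [IsScalarTower ℂ B V]
    [SMulCommClass A B V] [SMulCommClass B A V]
    (cA : A) (hcA : ∀ x : A, cA * x = x * cA)
    (cB : B) (hcB : ∀ x : B, cB * x = x * cB)
    (a : ℂ) (hcAact : ∀ v : V, cA • v = a • v) (hcBact : ∀ v : V, cB • v = a • v)
    (hV : Nontrivial V)
    (hirr : ∀ p : Submodule ℂ V,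
      (∀ (x : A) (v : V), v ∈ p → x • v ∈ p) →
      (∀ (b : B) (v : V), v ∈ p → b • v ∈ p) → p = ⊥ ∨ p = ⊤)
    (S : Submodule B V)
    (hS : IsSimpleModule B S)
    (hEnd : ∀ f : S →ₗ[B] S, ∃ z : ℂ, ∀ s : S, f s = z • s) :
    IsSimpleModule A (S →ₗ[B] V) ∧
      (∀ (f : S →ₗ[B] V) (s : S), (cA • f) s = a • f s) ∧
      ∃ e : ((S →ₗ[B] V) ⊗[ℂ] S) ≃ₗ[ℂ] V,
        (∀ (f : S →ₗ[B] V) (s : S), e (f ⊗ₜ s) = f s) ∧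
        (∀ (x : A) (f : S →ₗ[B] V) (s : S), e ((x • f) ⊗ₜ s) = x • e (f ⊗ₜ s)) ∧
        (∀ (b : B) (f : S →ₗ[B] V) (s : S), e (f ⊗ₜ (b • s)) = b • e (f ⊗ₜ s)) :=
  irreducible_module_factors_as_tensor_general cA a hcAact hirr S hS hEnd
end
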